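/- Every K-analytic function f : D → K with f(D) ⊆ 𝔽[[X^ℓ]] is locally constant on D. -/

import Mathlib

/- CONTEXT: `p` a prime, `𝔽 = ZMod p` the field with `p` elements, `ℓ ≥ 2` coprime to `p`,
`K = 𝔽((X))` (realized as `LaurentSeries (ZMod p)`) with its X-adic absolute value `vabs`
(`|X| = p⁻¹`) and valuation topology.  `D = {z : |z| < 1}` and
`𝔽[[X^ℓ]] = {∑_{k=0}^∞ a_k X^{ℓk} : (a_k) ∈ 𝔽^ℕ}`, i.e. the Laurent series supported on
`ℓℕ`.  `K`-analytic on `D` means locally given by pointwise convergent power series. -/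

noncomputable section

open Filter Topology

variable (p : ℕ) [Fact p.Prime]

open Classical in
/-- The X-adic absolute value on `(ZMod p)((X))`, with `|X| = p⁻¹`. -/
def vabs (z : LaurentSeries (ZMod p)) : ℝ :=
  if z = 0 then 0 else (p : ℝ) ^ (-z.order)

/-- `𝔽[[X^ℓ]] = {∑_{k=0}^∞ a_k X^{ℓk} : (a_k) ∈ 𝔽^ℕ}`. -/
def powerSeriesInXl (ℓ : ℕ) : Set (LaurentSeries (ZMod p)) :=
  {z | ∀ j : ℤ, z.coeff j ≠ 0 → ∃ k : ℕ, j = ℓ * k}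

/-- `f` is `K`-analytic on the open unit disk `D = {z : |z| < 1}`: around every point of
`D` it is given by a pointwise convergent power series. -/
def AnalyticOnD (f : LaurentSeries (ZMod p) → LaurentSeries (ZMod p)) : Prop :=
  ∀ z₀ : LaurentSeries (ZMod p), vabs p z₀ < 1 →
    ∃ (a : ℕ → LaurentSeries (ZMod p)) (t : Set (LaurentSeries (ZMod p))),
      IsOpen t ∧ z₀ ∈ t ∧
      ∀ z ∈ t, vabs p z < 1 →
        Tendsto (fun N => ∑ k ∈ Finset.range N, a k * (z - z₀) ^ k) atTop (𝓝 (f z))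

namespace AuxStmt5

variable {p}

/-- For `1 ≤ i < p ^ v`, the binomial coefficient `choose (p^v * q) i` is divisible by `p`. -/
lemma dvd_choose_of_lt_pow (v q i : ℕ) (h1 : 1 ≤ i) (h2 : i < p ^ v) :
    p ∣ Nat.choose (p ^ v * q) i := by
  induction v generalizing q i with
  | zero => rw [pow_zero] at h2; omega
  | succ v ih =>
    have hp : p.Prime := Fact.out
    have hstep := Choose.choose_modEq_choose_mod_mul_choose_div_nat
      (p := p) (n := p ^ (v + 1) * q) (k := i)
    have hrw : p ^ (v + 1) * q = p * (p ^ v * q) := by ring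
    rw [hrw, Nat.mul_mod_right, Nat.mul_div_cancel_left _ hp.pos] at hstep
    rw [hrw]
    rcases Nat.eq_zero_or_pos (i % p) with hr | hr
    · have hpi : p ∣ i := Nat.dvd_of_mod_eq_zero hr
      have hi1 : 1 ≤ i / p := (Nat.one_le_div_iff hp.pos).mpr (Nat.le_of_dvd (by omega) hpi)
      have hi2 : i / p < p ^ v := by
        rw [Nat.div_lt_iff_lt_mul hp.pos]
        rw [pow_succ] at h2
        exact h2
      have hd2 := ih q (i / p) hi1 hi2
      rw [hr, Nat.choose_zero_right, one_mul] at hstep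
      exact (Nat.modEq_zero_iff_dvd).mp (hstep.trans ((Nat.modEq_zero_iff_dvd).mpr hd2))
    · have h0 : Nat.choose 0 (i % p) = 0 := Nat.choose_eq_zero_of_lt hr
      rw [h0, zero_mul] at hstep
      exact (Nat.modEq_zero_iff_dvd).mp hstep

/-- If `p` does not divide `q`, then `p` does not divide `choose (p^v * q) (p^v)`. -/
lemma not_dvd_choose_pow (v q : ℕ) (hq : ¬ p ∣ q) :
    ¬ p ∣ Nat.choose (p ^ v * q) (p ^ v) := by
  induction v with
  | zero => simpa [Nat.choose_one_right] using hq
  | succ v ih =>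
    have hp : p.Prime := Fact.out
    have hstep := Choose.choose_modEq_choose_mod_mul_choose_div_nat
      (p := p) (n := p ^ (v + 1) * q) (k := p ^ (v + 1))
    have hrw : p ^ (v + 1) * q = p * (p ^ v * q) := by ring
    have hrw2 : p ^ (v + 1) = p * p ^ v := by ring
    rw [hrw, hrw2, Nat.mul_mod_right, Nat.mul_mod_right, Nat.mul_div_cancel_left _ hp.pos,
      Nat.mul_div_cancel_left _ hp.pos, Nat.choose_zero_right, one_mul] at hstep
    intro hdvd
    rw [hrw, hrw2] at hdvd
    exact ih ((Nat.modEq_zero_iff_dvd).mp (hstep.symm.trans ((Nat.modEq_zero_iff_dvd).mpr hdvd)))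

lemma coeff_sum (i : ℤ) (s : Finset ℕ) (F : ℕ → LaurentSeries (ZMod p)) :
    (∑ k ∈ s, F k).coeff i = ∑ k ∈ s, (F k).coeff i := by
  classical
  induction s using Finset.induction_on with
  | empty => simp
  | insert _ _ h ih =>
    rw [Finset.sum_insert h, Finset.sum_insert h, HahnSeries.coeff_add, ih]

lemma coeff_mul_single (x : LaurentSeries (ZMod p)) (b T : ℤ) (r : ZMod p) :
    (x * HahnSeries.single b r).coeff T = x.coeff (T - b) * r := by
  have h := HahnSeries.coeff_mul_single_add (r := r) (x := x) (a := T - b) (b := b)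
  rwa [sub_add_cancel] at h

lemma vabs_lt_one_iff (z : LaurentSeries (ZMod p)) :
    vabs p z < 1 ↔ ∀ i : ℤ, i ≤ 0 → z.coeff i = 0 := by
  have hp : p.Prime := Fact.out
  have hp1 : (1 : ℝ) < (p : ℝ) := by exact_mod_cast hp.one_lt
  by_cases h : z = 0
  · simp [vabs, h]
  · rw [show vabs p z = (p : ℝ) ^ (-z.order) from by simp [vabs, h]]
    have key : ((p : ℝ) ^ (-z.order) < 1) ↔ 0 < z.order := by
      rw [show (1 : ℝ) = (p : ℝ) ^ (0 : ℤ) by simp, zpow_lt_zpow_iff_right₀ hp1]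
      omega
    rw [key]
    constructor
    · intro ho i hi
      exact HahnSeries.coeff_eq_zero_of_lt_order (by omega)
    · intro hz
      by_contra hno
      push_neg at hno
      exact (mt HahnSeries.coeff_order_eq_zero.mp h) (hz _ (by omega))

lemma nhds_lt_v (L x : LaurentSeries (ZMod p)) (hx : x ≠ 0) :
    {y : LaurentSeries (ZMod p) | Valued.v (y - L) < Valued.v x} ∈ 𝓝 L := by
  rw [Valued.mem_nhds]
  have h' : Valued.v.restrict x ≠ 0 := by simp [hx]
  refine ⟨Units.mk0 _ h', fun y hy => ?_⟩
  exact (Valued.v).restrict_lt_iff.mp hy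

lemma coeff_tendsto {u : ℕ → LaurentSeries (ZMod p)} {L : LaurentSeries (ZMod p)}
    (h : Tendsto u atTop (𝓝 L)) (j : ℤ) :
    ∀ᶠ N in atTop, (u N).coeff j = L.coeff j := by
  set γ : (WithZero (Multiplicative ℤ))ˣ :=
    Units.mk0 ((Multiplicative.ofAdd (-(j + 1)) : Multiplicative ℤ) : WithZero (Multiplicative ℤ))
      WithZero.coe_ne_zero with hγ
  have hx0 : (HahnSeries.single (j + 1) (1 : ZMod p) : LaurentSeries (ZMod p)) ≠ 0 := by simp
  have hxle : Valued.v (HahnSeries.single (j + 1) (1 : ZMod p) : LaurentSeries (ZMod p)) ≤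
      ((Multiplicative.ofAdd (-(j + 1)) : Multiplicative ℤ) : WithZero (Multiplicative ℤ)) :=
    (LaurentSeries.valuation_le_iff_coeff_lt_eq_zero (ZMod p)).mpr
      fun i hi => HahnSeries.coeff_single_of_ne (by omega)
  have hs := nhds_lt_v L _ hx0
  filter_upwards [h hs] with N hN
  have hN' : Valued.v (u N - L) ≤
      ((Multiplicative.ofAdd (-(j + 1)) : Multiplicative ℤ) : WithZero (Multiplicative ℤ)) :=
    (le_of_lt hN).trans hxle
  exact LaurentSeries.eq_coeff_of_valuation_sub_lt (ZMod p) hN' (by omega)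

end AuxStmt5

open AuxStmt5

set_option maxHeartbeats 1600000 in
/-- every `K`-analytic function `f : D → K` with `f(D) ⊆ 𝔽[[X^ℓ]]` is
locally constant on `D`. -/
theorem analytic_map_into_powerSeriesInXl_locally_constant
    (ℓ : ℕ) (hℓ : 2 ≤ ℓ) (hcop : Nat.Coprime p ℓ)
    (f : LaurentSeries (ZMod p) → LaurentSeries (ZMod p))
    (hf : AnalyticOnD p f)
    (hfH : ∀ z : LaurentSeries (ZMod p), vabs p z < 1 → f z ∈ powerSeriesInXl p ℓ) :
    ∀ z₀ : LaurentSeries (ZMod p), vabs p z₀ < 1 →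
      ∃ t : Set (LaurentSeries (ZMod p)), IsOpen t ∧ z₀ ∈ t ∧
        ∀ z ∈ t, vabs p z < 1 → f z = f z₀ := by
  intro z₀ hz₀
  obtain ⟨a, t, ht_open, hz₀t, hconv⟩ := hf z₀ hz₀
  classical
  -- a small ball around `z₀` is contained in `t`
  obtain ⟨γ, hγ⟩ := Valued.mem_nhds.mp (ht_open.mem_nhds hz₀t)
  have hγ0 : MonoidWithZeroHom.ValueGroup₀.embedding γ.1 ≠ 0 := by
    intro h
    apply γ.ne_zero
    exact MonoidWithZeroHom.ValueGroup₀.embedding_inj.mp (h.trans (map_zero _).symm)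
  obtain ⟨g, hg⟩ := WithZero.ne_zero_iff_exists.mp hγ0
  set n₁ : ℤ := max 1 (1 - Multiplicative.toAdd g) with hn₁def
  have hn₁1 : 1 ≤ n₁ := le_max_left _ _
  have hn₁g : 1 - Multiplicative.toAdd g ≤ n₁ := le_max_right _ _
  have hmem : ∀ w : LaurentSeries (ZMod p), (∀ i : ℤ, i < n₁ → w.coeff i = 0) → z₀ + w ∈ t := by
    intro w hw
    apply hγ
    have h1 : Valued.v w ≤
        ((Multiplicative.ofAdd (-n₁) : Multiplicative ℤ) : WithZero (Multiplicative ℤ)) :=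
      (LaurentSeries.valuation_le_iff_coeff_lt_eq_zero (ZMod p)).mpr hw
    have h2 : ((Multiplicative.ofAdd (-n₁) : Multiplicative ℤ) : WithZero (Multiplicative ℤ)) <
        MonoidWithZeroHom.ValueGroup₀.embedding γ.1 := by
      rw [← hg, WithZero.coe_lt_coe, ← ofAdd_toAdd g, Multiplicative.ofAdd_lt]
      omega
    show Valued.v.restrict (z₀ + w - z₀) < γ.1
    rw [Valuation.restrict_lt_iff_lt_embedding, add_sub_cancel_left]
    exact lt_of_le_of_lt h1 h2
  have hz₀c := (vabs_lt_one_iff z₀).mp hz₀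
  have hD : ∀ w : LaurentSeries (ZMod p), (∀ i : ℤ, i ≤ 0 → w.coeff i = 0) →
      vabs p (z₀ + w) < 1 := by
    intro w hw
    refine (vabs_lt_one_iff _).mpr fun i hi => ?_
    rw [HahnSeries.coeff_add, hz₀c i hi, hw i hi, add_zero]
  -- convergence at the point `z₀ + X^{n₁}` gives a linear lower bound on supports
  have hz_b_mem : z₀ + HahnSeries.single n₁ (1 : ZMod p) ∈ t :=
    hmem _ (fun i hi => HahnSeries.coeff_single_of_ne (by omega))
  have hz_b_D : vabs p (z₀ + HahnSeries.single n₁ (1 : ZMod p)) < 1 :=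
    hD _ (fun i hi => HahnSeries.coeff_single_of_ne (by omega))
  have hconvb := hconv _ hz_b_mem hz_b_D
  simp only [add_sub_cancel_left] at hconvb
  have hterm : Tendsto (fun N => a N * (HahnSeries.single n₁ (1 : ZMod p)) ^ N) atTop
      (𝓝 0) := by
    have h1 := (hconvb.comp (tendsto_add_atTop_nat 1)).sub hconvb
    rw [sub_self] at h1
    refine h1.congr fun N => ?_
    simp [Finset.sum_range_succ]
  have hev : ∀ᶠ N in atTop, ∀ i : ℤ, i < 0 →
      (a N * (HahnSeries.single n₁ (1 : ZMod p)) ^ N).coeff i = 0 := by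
    have hs := nhds_lt_v (0 : LaurentSeries (ZMod p)) 1 one_ne_zero
    filter_upwards [hterm hs] with N hN i hi
    have hN' : Valued.v (a N * (HahnSeries.single n₁ (1 : ZMod p)) ^ N) <
        ((1 : (WithZero (Multiplicative ℤ))ˣ) : WithZero (Multiplicative ℤ)) := by
      simpa using hN
    have hle : Valued.v (a N * (HahnSeries.single n₁ (1 : ZMod p)) ^ N) ≤
        ((Multiplicative.ofAdd (-(0 : ℤ)) : Multiplicative ℤ) : WithZero (Multiplicative ℤ)) := by
      have heq : ((Multiplicative.ofAdd (-(0 : ℤ)) : Multiplicative ℤ) :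
          WithZero (Multiplicative ℤ))
          = ((1 : (WithZero (Multiplicative ℤ))ˣ) : WithZero (Multiplicative ℤ)) := by simp
      rw [heq]
      exact le_of_lt hN'
    exact LaurentSeries.coeff_zero_of_lt_valuation (ZMod p) hle hi
  obtain ⟨M, hM⟩ := Filter.eventually_atTop.mp hev
  set c₀ : ℤ := min 0 (((Finset.range (M + 1)).inf' (by simp) fun k => (a k).order + n₁ * k))
    with hc₀def
  have hc₀0 : c₀ ≤ 0 := min_le_left _ _
  have hstar : ∀ (k : ℕ) (s : ℤ), (a k).coeff s ≠ 0 → c₀ - n₁ * k ≤ s := by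
    intro k s hs
    rcases lt_or_ge k M with hk | hk
    · have h1 : (a k).order ≤ s := HahnSeries.order_le_of_coeff_ne_zero hs
      have h2 : c₀ ≤ (a k).order + n₁ * k :=
        (min_le_right _ _).trans (Finset.inf'_le _ (Finset.mem_range.mpr (by omega)))
      linarith
    · by_contra hcon
      push_neg at hcon
      have h0 : s + n₁ * k < 0 := by linarith
      have h3 := hM k hk (s + n₁ * k) h0
      rw [HahnSeries.single_pow, one_pow, nsmul_eq_mul, coeff_mul_single,
        show s + n₁ * (k : ℤ) - (k : ℤ) * n₁ = s by ring, mul_one] at h3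
      exact hs h3
  -- all higher coefficients vanish
  have hak : ∀ k : ℕ, 1 ≤ k → a k = 0 := by
    by_contra hcon
    push_neg at hcon
    obtain ⟨m₀, hm₀1, hm₀⟩ := hcon
    have hPex : ∃ k, 1 ≤ k ∧ a k ≠ 0 := ⟨m₀, hm₀1, hm₀⟩
    set m := Nat.find hPex with hmdef
    obtain ⟨hm1, ham⟩ := Nat.find_spec hPex
    have hmin : ∀ k : ℕ, 1 ≤ k → k < m → a k = 0 := by
      intro k h1 h2
      by_contra h
      exact Nat.find_min hPex h2 ⟨h1, h⟩
    set o : ℤ := (a m).order with hodef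
    have hlc : (a m).coeff o ≠ 0 := mt HahnSeries.coeff_order_eq_zero.mp ham
    have hp : p.Prime := Fact.out
    obtain ⟨v, q, hq, hmeq⟩ := Nat.exists_eq_pow_mul_and_not_dvd (n := m) (by omega) p hp.ne_one
    obtain ⟨b, hbdef⟩ : ∃ b : ℕ, b = p ^ v := ⟨_, rfl⟩
    have hb1 : 1 ≤ b := by rw [hbdef]; exact Nat.one_le_pow _ _ hp.pos
    have hbm : b ≤ m := by
      refine Nat.le_of_dvd (by omega) ?_
      rw [hbdef, hmeq]
      exact Dvd.intro q rfl
    have hCb : ((Nat.choose m b : ℕ) : ZMod p) ≠ 0 := by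
      rw [Ne, ZMod.natCast_eq_zero_iff, hmeq, hbdef]
      exact not_dvd_choose_pow v q hq
    have hCi : ∀ i : ℕ, 1 ≤ i → i < b → ((Nat.choose m i : ℕ) : ZMod p) = 0 := by
      intro i h1 h2
      rw [ZMod.natCast_eq_zero_iff, hmeq]
      refine dvd_choose_of_lt_pow v q i h1 ?_
      rw [← hbdef]
      exact h2
    set n : ℤ := max n₁ (o - c₀ + n₁ * (m + 1) + 2 * ((b : ℤ) - 1) + 1) with hndef
    have hnn₁ : n₁ ≤ n := le_max_left _ _
    have hn1 : 1 ≤ n := le_trans hn₁1 hnn₁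
    have hnbig : o - c₀ + n₁ * ((m : ℤ) + 1) + 2 * ((b : ℤ) - 1) + 1 ≤ n := le_max_right _ _
    have key : ∀ d : ℤ, 1 ≤ d → d ≤ 2 →
        ∃ k : ℕ, o + n * m + d * b = (ℓ : ℤ) * k := by
      intro d hd1 hd2
      set w₁ : LaurentSeries (ZMod p) :=
        HahnSeries.single (n + d) (1 : ZMod p) + HahnSeries.single n (1 : ZMod p) with hw₁def
      set w₂ : LaurentSeries (ZMod p) := HahnSeries.single n (1 : ZMod p) with hw₂def
      have hw₁c : ∀ i : ℤ, i < n₁ → w₁.coeff i = 0 := by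
        intro i hi
        rw [hw₁def, HahnSeries.coeff_add, HahnSeries.coeff_single_of_ne (by omega),
          HahnSeries.coeff_single_of_ne (by omega), add_zero]
      have hw₂c : ∀ i : ℤ, i < n₁ → w₂.coeff i = 0 := by
        intro i hi
        rw [hw₂def]
        exact HahnSeries.coeff_single_of_ne (by omega)
      have hz₁t : z₀ + w₁ ∈ t := hmem _ hw₁c
      have hz₂t : z₀ + w₂ ∈ t := hmem _ hw₂c
      have hz₁D : vabs p (z₀ + w₁) < 1 := hD _ (fun i hi => hw₁c i (by omega))
      have hz₂D : vabs p (z₀ + w₂) < 1 := hD _ (fun i hi => hw₂c i (by omega))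
      have hc₁ := hconv _ hz₁t hz₁D
      have hc₂ := hconv _ hz₂t hz₂D
      simp only [add_sub_cancel_left] at hc₁ hc₂
      set T : ℤ := o + n * m + d * b with hTdef
      obtain ⟨N, hN⟩ :=
        (((coeff_tendsto hc₁ T).and (coeff_tendsto hc₂ T)).and (eventually_gt_atTop m)).exists
      obtain ⟨⟨hN₁, hN₂⟩, hNm⟩ := hN
      have hw₁pow : ∀ k : ℕ, w₁ ^ k = ∑ i ∈ Finset.range (k + 1),
          HahnSeries.single ((n + d) * (i : ℤ) + n * ((k - i : ℕ) : ℤ))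
            ((Nat.choose k i : ℕ) : ZMod p) := by
        intro k
        rw [hw₁def, add_pow]
        refine Finset.sum_congr rfl fun i hi => ?_
        rw [HahnSeries.single_pow, HahnSeries.single_pow, one_pow, one_pow,
          HahnSeries.single_mul_single, one_mul]
        rw [show ((Nat.choose k i : ℕ) : LaurentSeries (ZMod p))
            = HahnSeries.single (0 : ℤ) ((Nat.choose k i : ℕ) : ZMod p) from ?_]
        · rw [HahnSeries.single_mul_single, add_zero, one_mul]
          congr 1
          rw [nsmul_eq_mul, nsmul_eq_mul]
          ring
        · rw [← map_natCast (HahnSeries.C : (ZMod p) →+* LaurentSeries (ZMod p)), HahnSeries.C_apply]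
      have hcoeff₁ : ∀ k : ℕ, (a k * w₁ ^ k).coeff T
          = ∑ i ∈ Finset.range (k + 1),
              (a k).coeff (T - ((n + d) * (i : ℤ) + n * ((k - i : ℕ) : ℤ)))
                * ((Nat.choose k i : ℕ) : ZMod p) := by
        intro k
        rw [hw₁pow k, Finset.mul_sum, coeff_sum]
        exact Finset.sum_congr rfl fun i hi => coeff_mul_single _ _ _ _
      have hcoeff₂ : ∀ k : ℕ, (a k * w₂ ^ k).coeff T = (a k).coeff (T - n * (k : ℤ)) := by
        intro k
        rw [hw₂def, HahnSeries.single_pow, one_pow, nsmul_eq_mul, coeff_mul_single, mul_one,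
          show T - (k : ℤ) * n = T - n * (k : ℤ) by ring]
      have hterm : ∀ k ∈ Finset.range N,
          (a k * w₁ ^ k).coeff T - (a k * w₂ ^ k).coeff T
            = if k = m then ((Nat.choose m b : ℕ) : ZMod p) * (a m).coeff o else 0 := by
        intro k hk
        have hsplit : (a k * w₁ ^ k).coeff T - (a k * w₂ ^ k).coeff T
            = ∑ i ∈ Finset.range k,
                (a k).coeff (T - ((n + d) * ((i : ℤ) + 1) + n * ((k - (i + 1) : ℕ) : ℤ)))
                  * ((Nat.choose k (i + 1) : ℕ) : ZMod p) := by
          rw [hcoeff₁ k, Finset.sum_range_succ', hcoeff₂ k]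
          simp only [Nat.cast_zero, mul_zero, zero_add, Nat.sub_zero, Nat.choose_zero_right,
            Nat.cast_one, mul_one, Nat.cast_add]
          rw [add_sub_cancel_right]
        rw [hsplit]
        rcases lt_trichotomy k m with hkm | rfl | hkm
        · rw [if_neg (by omega)]
          refine Finset.sum_eq_zero fun i hi => ?_
          have hk0 : 1 ≤ k := by
            have := Finset.mem_range.mp hi; omega
          rw [hmin k hk0 hkm, HahnSeries.coeff_zero, zero_mul]
        · rw [if_pos rfl]
          have heach : ∀ i ∈ Finset.range m,
              (a m).coeff (T - ((n + d) * ((i : ℤ) + 1) + n * ((m - (i + 1) : ℕ) : ℤ)))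
                  * ((Nat.choose m (i + 1) : ℕ) : ZMod p)
                = if i = b - 1 then ((Nat.choose m b : ℕ) : ZMod p) * (a m).coeff o else 0 := by
            intro i hi
            have hik : i + 1 ≤ m := Finset.mem_range.mp hi
            have hcast : ((m - (i + 1) : ℕ) : ℤ) = (m : ℤ) - (i : ℤ) - 1 := by
              rw [Nat.cast_sub hik]; push_cast; ring
            have hpos : T - ((n + d) * ((i : ℤ) + 1) + n * ((m - (i + 1) : ℕ) : ℤ))
                = o + d * ((b : ℤ) - ((i : ℤ) + 1)) := by
              rw [hcast, hTdef]; ring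
            rcases lt_trichotomy ((i : ℕ) + 1) b with hib | hib | hib
            · rw [if_neg (by omega), hCi (i + 1) (by omega) hib, mul_zero]
            · rw [if_pos (by omega), hpos,
                show (b : ℤ) - ((i : ℤ) + 1) = 0 from by omega, mul_zero, add_zero, hib,
                mul_comm]
            · rw [if_neg (by omega), hpos]
              have hx : ((b : ℤ) - ((i : ℤ) + 1)) < 0 := by
                have : (b : ℤ) < (i : ℤ) + 1 := by exact_mod_cast hib
                omega
              have hlt : o + d * ((b : ℤ) - ((i : ℤ) + 1)) < o := by
                have := mul_neg_of_pos_of_neg (show (0:ℤ) < d by omega) hx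
                linarith
              rw [HahnSeries.coeff_eq_zero_of_lt_order hlt, zero_mul]
          rw [Finset.sum_congr rfl heach, Finset.sum_ite_eq' (Finset.range m) (b - 1)
            (fun _ => ((Nat.choose m b : ℕ) : ZMod p) * (a m).coeff o),
            if_pos (Finset.mem_range.mpr (by omega))]
        · rw [if_neg (by omega)]
          refine Finset.sum_eq_zero fun i hi => ?_
          have hik : i + 1 ≤ k := Finset.mem_range.mp hi
          have hcast : ((k - (i + 1) : ℕ) : ℤ) = (k : ℤ) - (i : ℤ) - 1 := by
            rw [Nat.cast_sub hik]; push_cast; ring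
          have hzero : (a k).coeff (T - ((n + d) * ((i : ℤ) + 1) + n * ((k - (i + 1) : ℕ) : ℤ)))
              = 0 := by
            by_contra hne
            have h1 := hstar k _ hne
            rw [hcast, hTdef] at h1
            have e1 : o + n * (m : ℤ) + d * (b : ℤ)
                - ((n + d) * ((i : ℤ) + 1) + n * ((k : ℤ) - (i : ℤ) - 1))
                = o + n * (m : ℤ) + d * (b : ℤ) - d * (i : ℤ) - d - n * (k : ℤ) := by ring
            rw [e1] at h1
            have hk1 : (m : ℤ) + 1 ≤ (k : ℤ) := by exact_mod_cast hkm
            have hA3 : (n - n₁) * ((m : ℤ) + 1) ≤ (n - n₁) * (k : ℤ) :=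
              mul_le_mul_of_nonneg_left hk1 (by omega)
            have hA1 : (0 : ℤ) ≤ d * (i : ℤ) :=
              mul_nonneg (by omega) (by positivity)
            have hb1' : (1 : ℤ) ≤ (b : ℤ) := by exact_mod_cast hb1
            have hA2 : (0 : ℤ) ≤ (2 - d) * ((b : ℤ) - 1) :=
              mul_nonneg (by omega) (by omega)
            linarith [h1, hA1, hA2, hA3, hnbig]
          rw [hzero, zero_mul]
      have hfz : (f (z₀ + w₁)).coeff T - (f (z₀ + w₂)).coeff T
          = ((Nat.choose m b : ℕ) : ZMod p) * (a m).coeff o := by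
        rw [← hN₁, ← hN₂, coeff_sum, coeff_sum, ← Finset.sum_sub_distrib,
          Finset.sum_congr rfl hterm,
          Finset.sum_ite_eq' (Finset.range N) m
            (fun _ => ((Nat.choose m b : ℕ) : ZMod p) * (a m).coeff o),
          if_pos (Finset.mem_range.mpr hNm)]
      have hneq : (f (z₀ + w₁)).coeff T ≠ (f (z₀ + w₂)).coeff T := by
        intro h
        rw [h, sub_self] at hfz
        exact (mul_ne_zero hCb hlc) hfz.symm
      by_cases h1 : (f (z₀ + w₁)).coeff T = 0
      · have h2 : (f (z₀ + w₂)).coeff T ≠ 0 := by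
          intro h2
          exact hneq (by rw [h1, h2])
        obtain ⟨k, hk⟩ := hfH _ hz₂D T h2
        exact ⟨k, by exact_mod_cast hk⟩
      · obtain ⟨k, hk⟩ := hfH _ hz₁D T h1
        exact ⟨k, by exact_mod_cast hk⟩
    obtain ⟨k₁, hk₁⟩ := key 1 le_rfl one_le_two
    obtain ⟨k₂, hk₂⟩ := key 2 one_le_two le_rfl
    have hdvd : (ℓ : ℤ) ∣ (b : ℤ) := ⟨(k₂ : ℤ) - (k₁ : ℤ), by linarith⟩
    have hdvd' : ℓ ∣ b := Int.natCast_dvd_natCast.mp hdvd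
    have hone : ℓ = 1 := by
      refine Nat.eq_one_of_dvd_coprimes (a := p ^ v) (b := ℓ)
        (Nat.Coprime.pow_left v hcop) ?_ dvd_rfl
      rw [← hbdef]
      exact hdvd'
    omega
  -- conclusion: `f` is constant on `t ∩ D`, with value `a 0`
  refine ⟨t, ht_open, hz₀t, ?_⟩
  intro z hzt hzD
  have hcz := hconv z hzt hzD
  have hcz₀ := hconv z₀ hz₀t hz₀
  have hSz : ∀ N : ℕ, 1 ≤ N → ∑ k ∈ Finset.range N, a k * (z - z₀) ^ k = a 0 := by
    intro N hN
    have h := Finset.sum_eq_single_of_mem (s := Finset.range N)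
      (f := fun k => a k * (z - z₀) ^ k) 0 (Finset.mem_range.mpr (by omega))
      (fun k _ hk => by show a k * (z - z₀) ^ k = 0; rw [hak k (by omega), zero_mul])
    simpa using h
  have hSz₀ : ∀ N : ℕ, 1 ≤ N → ∑ k ∈ Finset.range N, a k * (z₀ - z₀) ^ k = a 0 := by
    intro N hN
    have h := Finset.sum_eq_single_of_mem (s := Finset.range N)
      (f := fun k => a k * (z₀ - z₀) ^ k) 0 (Finset.mem_range.mpr (by omega))
      (fun k _ hk => by show a k * (z₀ - z₀) ^ k = 0; rw [sub_self, zero_pow hk, mul_zero])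
    simpa using h
  have h1 : ∀ j : ℤ, (f z).coeff j = (a 0).coeff j := by
    intro j
    obtain ⟨N, hN⟩ := ((coeff_tendsto hcz j).and (eventually_ge_atTop 1)).exists
    rw [← hN.1, hSz N hN.2]
  have h2 : ∀ j : ℤ, (f z₀).coeff j = (a 0).coeff j := by
    intro j
    obtain ⟨N, hN⟩ := ((coeff_tendsto hcz₀ j).and (eventually_ge_atTop 1)).exists
    rw [← hN.1, hSz₀ N hN.2]
  exact HahnSeries.coeff_inj.mp (funext fun j => (h1 j).trans ((h2 j).symm))
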